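/- arXiv:1905.04712 — 2 statements merged into one kernel-verified Lean document; each statement's English description precedes it below -/
import Mathlib

section
/- Let M₀, M₁, N₀, N₁ be finite-dimensional complex vector spaces, f : M₀ → M₁, g : M₁ → M₀ with g ∘ f = 0 and f ∘ g = 0, and f' : N₀ → N₁, g' : N₁ → N₀ with g' ∘ f' = 0 and f' ∘ g' = 0. Define F : (M₀ ⊗ N₀) ⊕ (M₁ ⊗ N₁) → (M₀ ⊗ N₁) ⊕ (M₁ ⊗ N₀) by F(m₀ ⊗ n₀) = f(m₀) ⊗ n₀ + m₀ ⊗ f'(n₀) and F(m₁ ⊗ n₁) = g(m₁) ⊗ n₁ − m₁ ⊗ g'(n₁), and G : (M₀ ⊗ N₁) ⊕ (M₁ ⊗ N₀) → (M₀ ⊗ N₀) ⊕ (M₁ ⊗ N₁) by G(m₀ ⊗ n₁) = f(m₀) ⊗ n₁ + m₀ ⊗ g'(n₁) and G(m₁ ⊗ n₀) = g(m₁) ⊗ n₀ − m₁ ⊗ f'(n₀) (the super-Leibniz action of the odd operator x on the tensor product). Then G ∘ F = 0, F ∘ G = 0, and, writing h₀(M) = finrank(ker f) − finrank(range g), h₁(M)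 = finrank(ker g) − finrank(range f) and similarly for N, one has finrank(ker F) − finrank(range G) = h₀(M)h₀(N) + h₁(M)h₁(N) and finrank(ker G) − finrank(range F) = h₀(M)h₁(N) + h₁(M)h₀(N); that is, DS_x(M ⊗ N) ≅ DS_x(M) ⊗ DS_x(N) as super vector spaces. -/
/-!
`F` and `G` are both of the form `superLeibniz` (for `G` with `f'` and `g'` exchanged), so it
suffices to know the rank of that map: the kernels follow by rank–nullity, and both identities
become ring identities among the ranks of `f, g, f', g'`.

For the rank, let `ψ` reduce the second tensor factor modulo `im f'`, resp. `im g'`. Up to swapping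
components, `ψ ∘ F` is `(f ⊗ π) × (g ⊗ π)` with `π` the quotient maps, of rank
`rk f · dim (N₀ / im g') + rk g · dim (N₁ / im f')`, while right exactness of `⊗` gives
`im F ∩ ker ψ = (ker f ⊗ im f') × (ker g ⊗ im g')`.
-/

open Module TensorProduct LinearMap

section CommRing

variable {R M₀ M₁ N₀ N₁ : Type*} [CommRing R]
  [AddCommGroup M₀] [Module R M₀] [AddCommGroup M₁] [Module R M₁]
  [AddCommGroup N₀] [Module R N₀] [AddCommGroup N₁] [Module R N₁]

theorem TensorProduct.map_mem_map₂_mk {p : Submodule R M₁} {q : Submodule R N₁}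
    {φ : M₀ →ₗ[R] M₁} {χ : N₀ →ₗ[R] N₁} (hφ : range φ ≤ p) (hχ : range χ ≤ q)
    (x : M₀ ⊗[R] N₀) : map φ χ x ∈ Submodule.map₂ (mk R M₁ N₁) p q :=
  Submodule.map₂_le_map₂ hφ hχ (range_map φ χ ▸ mem_range_self _ x)

variable (f : M₀ →ₗ[R] M₁) (g : M₁ →ₗ[R] M₀) (f' : N₀ →ₗ[R] N₁) (g' : N₁ →ₗ[R] N₀)

def superLeibniz : (M₀ ⊗[R] N₀) × (M₁ ⊗[R] N₁) →ₗ[R] (M₀ ⊗[R] N₁) × (M₁ ⊗[R] N₀) :=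
  ((lTensor M₀ f').coprod (rTensor N₁ g)).prod ((rTensor N₀ f).coprod (-lTensor M₁ g'))

@[simp]
theorem superLeibniz_apply (a : M₀ ⊗[R] N₀) (b : M₁ ⊗[R] N₁) :
    superLeibniz f g f' g' (a, b) =
      (lTensor M₀ f' a + rTensor N₁ g b, rTensor N₀ f a - lTensor M₁ g' b) := by
  simp [superLeibniz, sub_eq_add_neg]

theorem eq_superLeibniz
    {F : (M₀ ⊗[R] N₀) × (M₁ ⊗[R] N₁) →ₗ[R] (M₀ ⊗[R] N₁) × (M₁ ⊗[R] N₀)}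
    (hF₀ : ∀ (m : M₀) (v : N₀), F (m ⊗ₜ v, 0) = (m ⊗ₜ f' v, f m ⊗ₜ v))
    (hF₁ : ∀ (m : M₁) (v : N₁), F (0, m ⊗ₜ v) = (g m ⊗ₜ v, -(m ⊗ₜ g' v))) :
    F = superLeibniz f g f' g' := by
  ext m v <;> simp [hF₀, hF₁]

variable {f g f' g'}

theorem superLeibniz_comp_superLeibniz (hgf : g ∘ₗ f = 0) (hfg : f ∘ₗ g = 0)
    (hg'f' : g' ∘ₗ f' = 0) (hf'g' : f' ∘ₗ g' = 0) :
    superLeibniz f g g' f' ∘ₗ superLeibniz f g f' g' = 0 := by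
  ext m v <;> simp [← comp_apply, hgf, hfg, hg'f', hf'g']

theorem prodMap_lTensor_mkQ_comp_superLeibniz :
    prodMap (lTensor M₀ (range f').mkQ) (lTensor M₁ (range g').mkQ) ∘ₗ superLeibniz f g f' g' =
      (LinearEquiv.prodComm R _ _).toLinearMap ∘ₗ
        prodMap (map f (range g').mkQ) (map g (range f').mkQ) := by
  ext m v <;> simp [(Submodule.Quotient.mk_eq_zero _).mpr (mem_range_self _ _)]

end CommRing

section Field

variable {K V W P Q : Type*} [Field K]
  [AddCommGroup V] [Module K V] [AddCommGroup W] [Module K W]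
  [AddCommGroup P] [Module K P] [AddCommGroup Q] [Module K Q]

theorem Submodule.finrank_map_add_finrank_inf_ker [FiniteDimensional K V]
    (p : Submodule K V) (ψ : V →ₗ[K] W) :
    finrank K (p.map ψ) + finrank K (p ⊓ ker ψ : Submodule K V) = finrank K p := by
  have h := (ψ ∘ₗ p.subtype).finrank_range_add_finrank_ker
  rwa [range_comp, Submodule.range_subtype, ker_comp, ← Submodule.finrank_map_subtype_eq,
    Submodule.map_comap_subtype] at h

theorem Submodule.finrank_prod [FiniteDimensional K V] [FiniteDimensional K W]
    (p : Submodule K V) (q : Submodule K W) :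
    finrank K (p.prod q) = finrank K p + finrank K q := by
  have hrange : p.prod q = range (prodMap p.subtype q.subtype) := by
    rw [range_prodMap, Submodule.range_subtype, Submodule.range_subtype]
  rw [hrange, finrank_range_of_inj (p.injective_subtype.prodMap q.injective_subtype),
    Module.finrank_prod]

theorem TensorProduct.finrank_map₂_mk [FiniteDimensional K V] [FiniteDimensional K W]
    (p : Submodule K V) (q : Submodule K W) :
    finrank K (Submodule.map₂ (mk K V W) p q) = finrank K p * finrank K q := by
  rw [← range_mapIncl, finrank_range_of_inj
    (Module.Flat.tensorProduct_mapIncl_injective_of_right p q), finrank_tensorProduct]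

theorem TensorProduct.finrank_range_map [FiniteDimensional K P] [FiniteDimensional K Q]
    (φ : V →ₗ[K] P) (χ : W →ₗ[K] Q) :
    finrank K (range (map φ χ)) = finrank K (range φ) * finrank K (range χ) := by
  rw [range_map, finrank_map₂_mk]

theorem TensorProduct.ker_map_mkQ (φ : V →ₗ[K] P) (q : Submodule K W) :
    ker (map φ q.mkQ) = range (lTensor V q.subtype) ⊔ range (rTensor W (ker φ).subtype) := by
  have hφ : map φ q.mkQ = rTensor (W ⧸ q) (range φ).subtype ∘ₗ map φ.rangeRestrict q.mkQ := by
    ext; simp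
  rw [hφ, ker_comp_of_ker_eq_bot _ (ker_eq_bot.mpr
    (Module.Flat.rTensor_preserves_injective_linearMap _ (range φ).injective_subtype))]
  refine TensorProduct.map_ker ?_ φ.surjective_rangeRestrict (exact_subtype_mkQ q)
    q.mkQ_surjective
  rw [exact_iff, ker_rangeRestrict, Submodule.range_subtype]

theorem LinearMap.intCast_finrank_ker [FiniteDimensional K V] (φ : V →ₗ[K] W) :
    (finrank K (ker φ) : ℤ) = finrank K V - finrank K (range φ) := by
  have := φ.finrank_range_add_finrank_ker
  omega

theorem Submodule.intCast_finrank_quotient [FiniteDimensional K V] (p : Submodule K V) :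
    (finrank K (V ⧸ p) : ℤ) = finrank K V - finrank K p := by
  have := p.finrank_quotient_add_finrank
  omega

end Field

section Rank

variable {K M₀ M₁ N₀ N₁ : Type*} [Field K]
  [AddCommGroup M₀] [Module K M₀] [AddCommGroup M₁] [Module K M₁]
  [AddCommGroup N₀] [Module K N₀] [AddCommGroup N₁] [Module K N₁]
  {f : M₀ →ₗ[K] M₁} {g : M₁ →ₗ[K] M₀} {f' : N₀ →ₗ[K] N₁} {g' : N₁ →ₗ[K] N₀}

theorem superLeibniz_comp_prodMap_rTensor_ker_subtype :
    superLeibniz f g f' g' ∘ₗ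
        prodMap (rTensor N₀ (ker f).subtype) (-rTensor N₁ (ker g).subtype) =
      prodMap (map (ker f).subtype f') (map (ker g).subtype g') := by
  ext m v <;> simp

theorem map₂_ker_prod_map₂_ker_le_range_superLeibniz_inf_ker :
    (Submodule.map₂ (mk K M₀ N₁) (ker f) (range f')).prod
        (Submodule.map₂ (mk K M₁ N₀) (ker g) (range g')) ≤
      range (superLeibniz f g f' g') ⊓
        ker (prodMap (lTensor M₀ (range f').mkQ) (lTensor M₁ (range g').mkQ)) := by
  have hreduce : prodMap (lTensor M₀ (range f').mkQ) (lTensor M₁ (range g').mkQ) ∘ₗ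
      prodMap (map (ker f).subtype f') (map (ker g).subtype g') = 0 := by
    ext m v <;> simp [(Submodule.Quotient.mk_eq_zero _).mpr (mem_range_self _ _)]
  rw [← Submodule.range_subtype (ker f), ← Submodule.range_subtype (ker g), ← range_map,
    ← range_map, ← range_prodMap]
  refine le_inf ?_ (range_le_ker_iff.mpr hreduce)
  rw [← superLeibniz_comp_prodMap_rTensor_ker_subtype]
  exact range_comp_le_range _ _

theorem range_superLeibniz_inf_ker (hgf : g ∘ₗ f = 0) (hfg : f ∘ₗ g = 0)
    (hg'f' : g' ∘ₗ f' = 0) (hf'g' : f' ∘ₗ g' = 0) :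
    range (superLeibniz f g f' g') ⊓
        ker (prodMap (lTensor M₀ (range f').mkQ) (lTensor M₁ (range g').mkQ)) =
      (Submodule.map₂ (mk K M₀ N₁) (ker f) (range f')).prod
        (Submodule.map₂ (mk K M₁ N₀) (ker g) (range g')) := by
  refine le_antisymm ?_ map₂_ker_prod_map₂_ker_le_range_superLeibniz_inf_ker
  have hf'_range_g' : f' ∘ₗ (range g').subtype = 0 :=
    le_ker_iff_comp_subtype_eq_zero.mp (range_le_ker_iff.mpr hf'g')
  have hg'_range_f' : g' ∘ₗ (range f').subtype = 0 :=
    le_ker_iff_comp_subtype_eq_zero.mp (range_le_ker_iff.mpr hg'f')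
  rw [← Submodule.map_comap_eq, ← ker_comp, prodMap_lTensor_mkQ_comp_superLeibniz,
    LinearEquiv.ker_comp, ker_prodMap, ker_map_mkQ, ker_map_mkQ]
  rintro _ ⟨⟨a, b⟩, ⟨ha, hb⟩, rfl⟩
  obtain ⟨_, ⟨u, rfl⟩, _, ⟨w, rfl⟩, rfl⟩ := Submodule.mem_sup.mp ha
  obtain ⟨_, ⟨u', rfl⟩, _, ⟨w', rfl⟩, rfl⟩ := Submodule.mem_sup.mp hb
  simp only [superLeibniz_apply, lTensor, rTensor, map_add, map_map, id_comp, comp_id,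
    hf'_range_g', hg'_range_f', comp_ker_subtype, map_zero_left, map_zero_right,
    LinearMap.zero_apply, zero_add, add_zero, Submodule.mem_prod]
  exact ⟨add_mem (map_mem_map₂_mk (ker f).range_subtype.le le_rfl w)
      (map_mem_map₂_mk (range_le_ker_iff.mpr hfg) (range f').range_subtype.le u'),
    sub_mem (map_mem_map₂_mk (range_le_ker_iff.mpr hgf) (range g').range_subtype.le u)
      (map_mem_map₂_mk (ker g).range_subtype.le le_rfl w')⟩

variable [FiniteDimensional K M₀] [FiniteDimensional K M₁] [FiniteDimensional K N₀]
  [FiniteDimensional K N₁]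

theorem finrank_range_superLeibniz (hgf : g ∘ₗ f = 0) (hfg : f ∘ₗ g = 0)
    (hg'f' : g' ∘ₗ f' = 0) (hf'g' : f' ∘ₗ g' = 0) :
    finrank K (range (superLeibniz f g f' g')) =
      finrank K (range f) * finrank K (N₀ ⧸ range g') +
        finrank K (range g) * finrank K (N₁ ⧸ range f') +
      (finrank K (ker f) * finrank K (range f') + finrank K (ker g) * finrank K (range g')) := by
  rw [← Submodule.finrank_map_add_finrank_inf_ker _
      (prodMap (lTensor M₀ (range f').mkQ) (lTensor M₁ (range g').mkQ)),
    range_superLeibniz_inf_ker hgf hfg hg'f' hf'g', ← range_comp,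
    prodMap_lTensor_mkQ_comp_superLeibniz, range_comp, LinearEquiv.finrank_map_eq,
    range_prodMap, Submodule.finrank_prod, Submodule.finrank_prod, finrank_range_map,
    finrank_range_map, Submodule.range_mkQ, Submodule.range_mkQ, finrank_top, finrank_top,
    finrank_map₂_mk, finrank_map₂_mk]

end Rank

/-- `DS_x(M ⊗ N) ≅ DS_x(M) ⊗ DS_x(N)` on the level of
super vector spaces: if `F` and `G` are the even-to-odd and odd-to-even parts
of the super-Leibniz action of the odd square-zero operators `x = (f,g)` on `M`
and `x = (f',g')` on `N`, then `G ∘ F = 0`, `F ∘ G = 0`, and the even and odd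
superdimension contributions of `ker/im` multiply as for a tensor product. -/
theorem DS_tensor_product
    (M₀ M₁ N₀ N₁ : Type*)
    [AddCommGroup M₀] [Module ℂ M₀] [AddCommGroup M₁] [Module ℂ M₁]
    [AddCommGroup N₀] [Module ℂ N₀] [AddCommGroup N₁] [Module ℂ N₁]
    [FiniteDimensional ℂ M₀] [FiniteDimensional ℂ M₁]
    [FiniteDimensional ℂ N₀] [FiniteDimensional ℂ N₁]
    (f : M₀ →ₗ[ℂ] M₁) (g : M₁ →ₗ[ℂ] M₀)
    (f' : N₀ →ₗ[ℂ] N₁) (g' : N₁ →ₗ[ℂ] N₀)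
    (hgf : g ∘ₗ f = 0) (hfg : f ∘ₗ g = 0)
    (hg'f' : g' ∘ₗ f' = 0) (hf'g' : f' ∘ₗ g' = 0)
    (F : (M₀ ⊗[ℂ] N₀) × (M₁ ⊗[ℂ] N₁) →ₗ[ℂ] (M₀ ⊗[ℂ] N₁) × (M₁ ⊗[ℂ] N₀))
    (G : (M₀ ⊗[ℂ] N₁) × (M₁ ⊗[ℂ] N₀) →ₗ[ℂ] (M₀ ⊗[ℂ] N₀) × (M₁ ⊗[ℂ] N₁))
    (hF₀ : ∀ (m : M₀) (v : N₀), F (m ⊗ₜ v, 0) = (m ⊗ₜ f' v, f m ⊗ₜ v))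
    (hF₁ : ∀ (m : M₁) (v : N₁), F (0, m ⊗ₜ v) = (g m ⊗ₜ v, -(m ⊗ₜ g' v)))
    (hG₀ : ∀ (m : M₀) (v : N₁), G (m ⊗ₜ v, 0) = (m ⊗ₜ g' v, f m ⊗ₜ v))
    (hG₁ : ∀ (m : M₁) (v : N₀), G (0, m ⊗ₜ v) = (g m ⊗ₜ v, -(m ⊗ₜ f' v))) :
    G ∘ₗ F = 0 ∧ F ∘ₗ G = 0 ∧
    (finrank ℂ (LinearMap.ker F) : ℤ) - (finrank ℂ (LinearMap.range G) : ℤ)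
      = ((finrank ℂ (LinearMap.ker f) : ℤ) - (finrank ℂ (LinearMap.range g) : ℤ))
          * ((finrank ℂ (LinearMap.ker f') : ℤ) - (finrank ℂ (LinearMap.range g') : ℤ))
        + ((finrank ℂ (LinearMap.ker g) : ℤ) - (finrank ℂ (LinearMap.range f) : ℤ))
          * ((finrank ℂ (LinearMap.ker g') : ℤ) - (finrank ℂ (LinearMap.range f') : ℤ)) ∧
    (finrank ℂ (LinearMap.ker G) : ℤ) - (finrank ℂ (LinearMap.range F) : ℤ)
      = ((finrank ℂ (LinearMap.ker f) : ℤ) - (finrank ℂ (LinearMap.range g) : ℤ))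
          * ((finrank ℂ (LinearMap.ker g') : ℤ) - (finrank ℂ (LinearMap.range f') : ℤ))
        + ((finrank ℂ (LinearMap.ker g) : ℤ) - (finrank ℂ (LinearMap.range f) : ℤ))
          * ((finrank ℂ (LinearMap.ker f') : ℤ) - (finrank ℂ (LinearMap.range g') : ℤ)) := by
  obtain rfl := eq_superLeibniz f g f' g' hF₀ hF₁
  obtain rfl := eq_superLeibniz f g g' f' hG₀ hG₁
  refine ⟨superLeibniz_comp_superLeibniz hgf hfg hg'f' hf'g',
    superLeibniz_comp_superLeibniz hgf hfg hf'g' hg'f', ?_, ?_⟩ <;>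
  · rw [LinearMap.intCast_finrank_ker, finrank_range_superLeibniz hgf hfg hg'f' hf'g',
      finrank_range_superLeibniz hgf hfg hf'g' hg'f']
    push_cast
    simp only [LinearMap.intCast_finrank_ker, Submodule.intCast_finrank_quotient, finrank_prod,
      finrank_tensorProduct]
    push_cast
    ring
end

section
/- Let n ≥ 1, let C ∈ Mₙ(ℂ) satisfy Cᵀ = −C and rank C = s, and let x = fromBlocks 0 0 C 0 ∈ M_{2n}(ℂ) (an odd element of the periplectic Lie superalgebra p(n)). Then x · x = 0, range x ⊆ ker x, the quotient ker x / range x has dimension 2(n − s), and more precisely the image in this quotient of ker x ∩ (ℂⁿ ⊕ 0) has dimension n − s and the image of ker x ∩ (0 ⊕ ℂⁿ) has dimension n − s; that is, DS_x of the natural representation ℂ^(n|n) of p(n) is the super vector space ℂ^(n−s|n−s). -/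
/-! The map `x` sends `(u, w)` to `(0, C u)`, so `im x = 0 ⊕ im C` lies in the odd part
`O = 0 ⊕ ℂⁿ`, which lies in `ker x`. For any `f` with `im f ≤ O ≤ ker f` and a complement `E`
of `O`, the image of `O` in `ker f / im f` is `O / im f`, of dimension `dim O - rk f`, while
`E ∩ ker f` meets `im f` trivially and, since `E + ker f` is everything, has dimension
`dim E + dim ker f - dim V = dim E - rk f`. As `rk x = rk C = s`, both parities have
dimension `n - s`. -/

open Matrix Module

/-- The odd element `x = fromBlocks 0 0 C 0` of the periplectic Lie superalgebra `p(n)`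
(for `C` antisymmetric), as a `2n × 2n` matrix. -/
noncomputable def periplecticX (n : ℕ) (C : Matrix (Fin n) (Fin n) ℂ) :
    Matrix (Fin n ⊕ Fin n) (Fin n ⊕ Fin n) ℂ :=
  Matrix.fromBlocks 0 0 C 0

/-- The even subspace `ℂⁿ ⊕ 0` of `ℂ^(n|n)` (vectors vanishing on the odd coordinates). -/
noncomputable def evenSubspace (n : ℕ) : Submodule ℂ (Fin n ⊕ Fin n → ℂ) :=
  LinearMap.ker (LinearMap.funLeft ℂ ℂ (Sum.inr : Fin n → Fin n ⊕ Fin n))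

/-- The odd subspace `0 ⊕ ℂⁿ` of `ℂ^(n|n)` (vectors vanishing on the even coordinates). -/
noncomputable def oddSubspace (n : ℕ) : Submodule ℂ (Fin n ⊕ Fin n → ℂ) :=
  LinearMap.ker (LinearMap.funLeft ℂ ℂ (Sum.inl : Fin n → Fin n ⊕ Fin n))

namespace Submodule

variable {k V W : Type*} [Field k] [AddCommGroup V] [Module k V] [AddCommGroup W] [Module k W]

theorem finrank_comap_of_injective {f : W →ₗ[k] V} (hf : Function.Injective f)
    (S : Submodule k V) : finrank k (S.comap f) = finrank k ↥(LinearMap.range f ⊓ S) := by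
  rw [(equivMapOfInjective f hf _).finrank_eq, map_comap_eq]

variable [FiniteDimensional k V] {R K : Submodule k V}

theorem finrank_quotient_comap_subtype_add (hRK : R ≤ K) :
    finrank k (K ⧸ R.comap K.subtype) + finrank k R = finrank k K := by
  rw [← finrank_quotient_add_finrank (R.comap K.subtype),
    finrank_comap_of_injective K.injective_subtype, range_subtype, inf_eq_right.mpr hRK]

theorem finrank_map_mkQ_comap_subtype_add (hRK : R ≤ K) (P : Submodule k V) :
    finrank k ((P.comap K.subtype).map (R.comap K.subtype).mkQ) + finrank k ↥(R ⊓ P)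
      = finrank k ↥(K ⊓ P) := by
  set g := (R.comap K.subtype).mkQ ∘ₗ (P.comap K.subtype).subtype
  have hrange : LinearMap.range g = (P.comap K.subtype).map (R.comap K.subtype).mkQ := by
    rw [LinearMap.range_comp, range_subtype]
  have hker : LinearMap.ker g = R.comap (K.subtype ∘ₗ (P.comap K.subtype).subtype) := by
    rw [LinearMap.ker_comp, ker_mkQ, comap_comp]
  have hincl : LinearMap.range (K.subtype ∘ₗ (P.comap K.subtype).subtype) = K ⊓ P := by
    rw [LinearMap.range_comp, range_subtype, map_comap_subtype]
  have hinj : Function.Injective (K.subtype ∘ₗ (P.comap K.subtype).subtype) :=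
    Subtype.val_injective.comp Subtype.val_injective
  have := LinearMap.finrank_range_add_finrank_ker g
  rwa [hrange, hker, finrank_comap_of_injective hinj, hincl, inf_right_comm,
    inf_eq_right.mpr hRK, finrank_comap_of_injective K.injective_subtype, range_subtype]
    at this

end Submodule

namespace LinearMap

variable {k V : Type*} [Field k] [AddCommGroup V] [Module k V] [FiniteDimensional k V]
  {f : V →ₗ[k] V}

theorem finrank_ker_quotient_range_add_two_mul_finrank_range (hf : range f ≤ ker f) :
    finrank k (ker f ⧸ (range f).comap (ker f).subtype) + 2 * finrank k (range f)
      = finrank k V := by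
  have := Submodule.finrank_quotient_comap_subtype_add hf
  have := finrank_range_add_finrank_ker f
  omega

theorem finrank_map_mkQ_add_finrank_range_of_isCompl {E O : Submodule k V} (hEO : IsCompl E O)
    (hfO : range f ≤ O) (hOf : O ≤ ker f) :
    finrank k ((E.comap (ker f).subtype).map ((range f).comap (ker f).subtype).mkQ)
      + finrank k (range f) = finrank k E := by
  have himage := Submodule.finrank_map_mkQ_comap_subtype_add (hfO.trans hOf) E
  have hdisj : range f ⊓ E = ⊥ := disjoint_iff.mp (hEO.disjoint.symm.mono_left hfO)
  have hsup : ker f ⊔ E = ⊤ := codisjoint_iff.mp (hEO.codisjoint.symm.mono_left hOf)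
  have hdim := Submodule.finrank_sup_add_finrank_inf_eq (ker f) E
  have := finrank_range_add_finrank_ker f
  rw [hdisj, finrank_bot] at himage
  rw [hsup, finrank_top] at hdim
  omega

theorem finrank_map_mkQ_add_finrank_range_of_le {O : Submodule k V} (hfO : range f ≤ O)
    (hOf : O ≤ ker f) :
    finrank k ((O.comap (ker f).subtype).map ((range f).comap (ker f).subtype).mkQ)
      + finrank k (range f) = finrank k O := by
  have := Submodule.finrank_map_mkQ_comap_subtype_add (hfO.trans hOf) O
  rwa [inf_eq_left.mpr hfO, inf_eq_right.mpr hOf] at this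

end LinearMap

theorem LinearMap.finrank_ker_funLeft_add_card {k α β : Type*} [Field k] [Fintype α] [Fintype β]
    {σ : α → β} (hσ : Function.Injective σ) :
    finrank k (LinearMap.ker (LinearMap.funLeft k k σ)) + Fintype.card α = Fintype.card β := by
  have := LinearMap.finrank_range_add_finrank_ker (LinearMap.funLeft k k σ)
  rw [LinearMap.range_eq_top.mpr (LinearMap.funLeft_surjective_of_injective k k σ hσ),
    finrank_top, finrank_fintype_fun_eq_card, finrank_fintype_fun_eq_card] at this
  omega

theorem finrank_evenSubspace (n : ℕ) : finrank ℂ (evenSubspace n) = n := by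
  have := LinearMap.finrank_ker_funLeft_add_card (k := ℂ) (Sum.inr_injective (α := Fin n) (β := Fin n))
  rw [Fintype.card_sum, Fintype.card_fin] at this
  exact Nat.add_right_cancel this

theorem finrank_oddSubspace (n : ℕ) : finrank ℂ (oddSubspace n) = n := by
  have := LinearMap.finrank_ker_funLeft_add_card (k := ℂ) (Sum.inl_injective (α := Fin n) (β := Fin n))
  rw [Fintype.card_sum, Fintype.card_fin] at this
  exact Nat.add_right_cancel this

theorem isCompl_evenSubspace_oddSubspace (n : ℕ) : IsCompl (evenSubspace n) (oddSubspace n) := by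
  constructor
  · rw [Submodule.disjoint_def]
    intro v hE hO
    funext i
    cases i with
    | inl i => exact congrFun hO i
    | inr i => exact congrFun hE i
  · rw [codisjoint_iff, eq_top_iff]
    intro v _
    refine Submodule.mem_sup.mpr
      ⟨Sum.elim (v ∘ Sum.inl) 0, rfl, Sum.elim 0 (v ∘ Sum.inr), rfl, ?_⟩
    funext i
    cases i <;> simp

section Periplectic

variable {n : ℕ} (C : Matrix (Fin n) (Fin n) ℂ)

theorem periplecticX_mulVec (v : Fin n ⊕ Fin n → ℂ) :
    periplecticX n C *ᵥ v = Sum.elim (0 : Fin n → ℂ) (C *ᵥ (v ∘ Sum.inl)) := by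
  simp [periplecticX, fromBlocks_mulVec]

theorem periplecticX_mul_self : periplecticX n C * periplecticX n C = 0 := by
  simp [periplecticX, fromBlocks_multiply]

theorem range_periplecticX_le_oddSubspace :
    LinearMap.range (periplecticX n C).mulVecLin ≤ oddSubspace n := by
  rintro _ ⟨v, rfl⟩
  show (periplecticX n C *ᵥ v) ∘ Sum.inl = 0
  rw [periplecticX_mulVec]
  rfl

theorem oddSubspace_le_ker_periplecticX :
    oddSubspace n ≤ LinearMap.ker (periplecticX n C).mulVecLin := by
  intro v hv
  have hv : v ∘ Sum.inl = 0 := hv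
  simp [periplecticX_mulVec, hv]

theorem periplecticX_mulVecLin :
    (periplecticX n C).mulVecLin
      = ((LinearEquiv.sumArrowLequivProdArrow _ _ ℂ ℂ).symm.toLinearMap ∘ₗ LinearMap.inr ℂ _ _)
        ∘ₗ C.mulVecLin ∘ₗ LinearMap.funLeft ℂ ℂ Sum.inl := by
  refine LinearMap.ext fun v => ?_
  rw [mulVecLin_apply, periplecticX_mulVec]
  rfl

theorem rank_periplecticX : (periplecticX n C).rank = C.rank := by
  rw [Matrix.rank, Matrix.rank, periplecticX_mulVecLin, LinearMap.range_comp,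
    LinearMap.range_comp_of_range_eq_top _ (LinearMap.range_eq_top.mpr
      (LinearMap.funLeft_surjective_of_injective ℂ ℂ _ Sum.inl_injective))]
  refine (Submodule.equivMapOfInjective _ ?_ _).finrank_eq.symm
  rw [LinearMap.coe_comp, LinearEquiv.coe_coe]
  exact (LinearEquiv.injective _).comp LinearMap.inr_injective

end Periplectic

theorem DS_natural_representation_general (n s : ℕ)
    (C : Matrix (Fin n) (Fin n) ℂ) (hrk : C.rank = s) :
    periplecticX n C * periplecticX n C = 0 ∧
    LinearMap.range (periplecticX n C).mulVecLin
      ≤ LinearMap.ker (periplecticX n C).mulVecLin ∧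
    finrank ℂ
      (LinearMap.ker (periplecticX n C).mulVecLin ⧸
        (LinearMap.range (periplecticX n C).mulVecLin).comap
          (LinearMap.ker (periplecticX n C).mulVecLin).subtype)
      = 2 * (n - s) ∧
    finrank ℂ
      (Submodule.map
        ((LinearMap.range (periplecticX n C).mulVecLin).comap
          (LinearMap.ker (periplecticX n C).mulVecLin).subtype).mkQ
        ((evenSubspace n).comap (LinearMap.ker (periplecticX n C).mulVecLin).subtype))
      = n - s ∧
    finrank ℂ
      (Submodule.map
        ((LinearMap.range (periplecticX n C).mulVecLin).comap
          (LinearMap.ker (periplecticX n C).mulVecLin).subtype).mkQ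
        ((oddSubspace n).comap (LinearMap.ker (periplecticX n C).mulVecLin).subtype))
      = n - s := by
  have hfO := range_periplecticX_le_oddSubspace C
  have hOf := oddSubspace_le_ker_periplecticX C
  have hrange : finrank ℂ (LinearMap.range (periplecticX n C).mulVecLin) = s :=
    (rank_periplecticX C).trans hrk
  have hV : finrank ℂ (Fin n ⊕ Fin n → ℂ) = 2 * n := by simp [two_mul]
  have hDS := LinearMap.finrank_ker_quotient_range_add_two_mul_finrank_range (hfO.trans hOf)
  have hEven := LinearMap.finrank_map_mkQ_add_finrank_range_of_isCompl
    (isCompl_evenSubspace_oddSubspace n) hfO hOf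
  have hOdd := LinearMap.finrank_map_mkQ_add_finrank_range_of_le hfO hOf
  rw [hrange, hV] at hDS
  rw [hrange, finrank_evenSubspace] at hEven
  rw [hrange, finrank_oddSubspace] at hOdd
  exact ⟨periplecticX_mul_self C, hfO.trans hOf, by omega, by omega, by omega⟩

/-- For `C` antisymmetric of rank `s` and `x = fromBlocks 0 0 C 0`,
one has `x² = 0`, `im x ⊆ ker x`, `dim (ker x / im x) = 2(n-s)`, and the images in
`ker x / im x` of `ker x ∩ (ℂⁿ ⊕ 0)` and of `ker x ∩ (0 ⊕ ℂⁿ)` each have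
dimension `n - s`; that is, `DS_x(ℂ^(n|n)) = ℂ^(n-s|n-s)`. -/
theorem DS_natural_representation (n s : ℕ) (hn : 1 ≤ n)
    (C : Matrix (Fin n) (Fin n) ℂ) (hC : Cᵀ = -C) (hrk : C.rank = s) :
    periplecticX n C * periplecticX n C = 0 ∧
    LinearMap.range (periplecticX n C).mulVecLin
      ≤ LinearMap.ker (periplecticX n C).mulVecLin ∧
    finrank ℂ
      (LinearMap.ker (periplecticX n C).mulVecLin ⧸
        (LinearMap.range (periplecticX n C).mulVecLin).comap
          (LinearMap.ker (periplecticX n C).mulVecLin).subtype)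
      = 2 * (n - s) ∧
    finrank ℂ
      (Submodule.map
        ((LinearMap.range (periplecticX n C).mulVecLin).comap
          (LinearMap.ker (periplecticX n C).mulVecLin).subtype).mkQ
        ((evenSubspace n).comap (LinearMap.ker (periplecticX n C).mulVecLin).subtype))
      = n - s ∧
    finrank ℂ
      (Submodule.map
        ((LinearMap.range (periplecticX n C).mulVecLin).comap
          (LinearMap.ker (periplecticX n C).mulVecLin).subtype).mkQ
        ((oddSubspace n).comap (LinearMap.ker (periplecticX n C).mulVecLin).subtype))
      = n - s :=
  DS_natural_representation_general n s C hrk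
end
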